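/- Let G = (V,E) be a directed graph that is locally finite, simple, and strongly connected, and let κ_0 ∈ ℝ. If κ(u, v) ≥ κ_0 for every edge (u, v) ∈ E, then κ(x, y) ≥ κ_0 for every pair of vertices (x, y) such that there exists a directed path from x to y. -/

import Mathlib

open Filter Set Topology

variable {V : Type*}

/-- The out-neighborhood of a vertex. -/
def outN (E : V → V → Prop) (x : V) : Set V := {y | E x y}

/-- The in-neighborhood of a vertex. -/
def inN (E : V → V → Prop) (x : V) : Set V := {y | E y x}

/-- The neighborhood `Γ(x) = Γ^in(x) ∪ Γ^out(x)` of a vertex. -/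
def nbhd (E : V → V → Prop) (x : V) : Set V := inN E x ∪ outN E x

/-- The degree `d_x = |Γ(x)|`. -/
noncomputable def deg (E : V → V → Prop) (x : V) : ℕ := (nbhd E x).ncard

/-- The out-degree `d_x^out = |Γ^out(x)|`. -/
noncomputable def outDeg (E : V → V → Prop) (x : V) : ℕ := (outN E x).ncard

/-- The in-degree `d_x^in = |Γ^in(x)|`. -/
noncomputable def inDeg (E : V → V → Prop) (x : V) : ℕ := (inN E x).ncard

/-- A directed graph is locally finite if every vertex has finite degree. -/
def LocFin (E : V → V → Prop) : Prop := ∀ x, (nbhd E x).Finite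

/-- A directed graph (with edges given by a relation, hence no multi-edges) is simple when
it has no loops. -/
def NoLoops (E : V → V → Prop) : Prop := ∀ x, ¬ E x x

/-- `f 0, f 1, …, f n` is a directed walk of length `n` (consecutive pairs are edges). -/
def IsDiWalk (E : V → V → Prop) (n : ℕ) (f : ℕ → V) : Prop := ∀ i, i < n → E (f i) (f (i + 1))

/-- A directed graph is strongly connected if for any two vertices there exists a
directed path (of length at least one) from one to the other. -/
def StronglyConnected (E : V → V → Prop) : Prop :=
  ∀ x y : V, ∃ n, 1 ≤ n ∧ ∃ f : ℕ → V, f 0 = x ∧ f n = y ∧ IsDiWalk E n f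

/-- The distance `d(x,y)`: the length of a shortest directed path from `x` to `y`. -/
noncomputable def ddist (E : V → V → Prop) (x y : V) : ℕ :=
  sInf {n : ℕ | ∃ f : ℕ → V, f 0 = x ∧ f n = y ∧ IsDiWalk E n f}

open Classical in
/-- The probability measure `m_x^α`. -/
noncomputable def mAlpha (E : V → V → Prop) (α : ℝ) (x : V) : V → ℝ := fun v =>
  if v = x then α + (1 - α) * (inDeg E x : ℝ) / (deg E x : ℝ)
  else if E x v then (1 - α) / (deg E x : ℝ)
  else 0

/-- A coupling between `m_x^α` and `m_y^α`: a map `A : V × V → [0,1]` (of finite support)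
whose marginals are `m_x^α` and `m_y^α`. -/
def IsCoupling (E : V → V → Prop) (α : ℝ) (x y : V) (A : V → V → ℝ) : Prop :=
  (Function.support fun p : V × V => A p.1 p.2).Finite ∧
  (∀ u v, A u v ∈ Set.Icc (0 : ℝ) 1) ∧
  (∀ u, ∑ᶠ v, A u v = mAlpha E α x u) ∧
  (∀ v, ∑ᶠ u, A u v = mAlpha E α y v)

/-- The 1-Wasserstein distance `W(m_x^α, m_y^α)`. -/
noncomputable def Wass (E : V → V → Prop) (α : ℝ) (x y : V) : ℝ :=
  sInf {w : ℝ | ∃ A : V → V → ℝ, IsCoupling E α x y A ∧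
    w = ∑ᶠ u, ∑ᶠ v, A u v * (ddist E u v : ℝ)}

/-- The α-Ricci curvature `κ_α(x,y) = 1 − W(m_x^α, m_y^α)/d(x,y)`. -/
noncomputable def ricciAlpha (E : V → V → Prop) (α : ℝ) (x y : V) : ℝ :=
  1 - Wass E α x y / (ddist E x y : ℝ)

/-- `RicciTendsto E x y k` means the Ricci curvature `κ(x,y) = lim_{α→1} κ_α(x,y)/(1−α)`
exists and equals `k`. -/
def RicciTendsto (E : V → V → Prop) (x y : V) (k : ℝ) : Prop :=
  Tendsto (fun α : ℝ => ricciAlpha E α x y / (1 - α)) (𝓝[<] (1 : ℝ)) (𝓝 k)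

/-- A directed graph is Ricci-flat if `κ(x,y) = 0` for every edge `(x,y)`. -/
def RicciFlat (E : V → V → Prop) : Prop := ∀ x y : V, E x y → RicciTendsto E x y 0

/-!
Since `deg E x` counts `Γ^in(x) ∪ Γ^out(x)`, the measure `m_x^α` has total mass
`α + (1 - α) * degRatio E x`, which exceeds one when `x` has reciprocal neighbours. Couplings
only exist between measures of equal mass; otherwise `Wass = sInf ∅ = 0`, so
`κ_α / (1 - α) = 1 / (1 - α)` diverges. Hence a curvature on every edge forces `degRatio` to be
constant, and then:

* gluing couplings gives the triangle inequality for `Wass`, so along a shortest path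
  `x = f 0, …, f N = y` we get `N κ_α(x,y) ≥ ∑ κ_α(f i, f (i+1))`;
* `m_x^β` is the mixture `l m_x^α + (1 - l) δ_x` with `l = (1 - β)/(1 - α)`, so
  `W_β ≤ l W_α + (1 - l) d(x,y)`; thus `κ_α / (1 - α)` is monotone in `α`, and it is bounded
  above, so `κ(x,y)` exists.

Letting `α → 1` gives `N κ(x,y) ≥ ∑ κ(f i, f (i+1)) ≥ N κ₀`.
-/

section Walks

variable {E : V → V → Prop} {x y : V} {m n : ℕ} {f g : ℕ → V}

lemma ddist_le_of_walk (hw : IsDiWalk E n f) (hx : f 0 = x) (hy : f n = y) :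
    ddist E x y ≤ n :=
  Nat.sInf_le ⟨f, hx, hy, hw⟩

lemma ddist_self : ddist E x x = 0 :=
  Nat.le_zero.1 <| ddist_le_of_walk (f := fun _ => x) (fun _ hi => (Nat.not_lt_zero _ hi).elim)
    rfl rfl

lemma exists_walk_ddist (hsc : StronglyConnected E) (x y : V) :
    ∃ f : ℕ → V, f 0 = x ∧ f (ddist E x y) = y ∧ IsDiWalk E (ddist E x y) f := by
  obtain ⟨n, -, f, hf⟩ := hsc x y
  exact Nat.sInf_mem (s := {n | ∃ f : ℕ → V, f 0 = x ∧ f n = y ∧ IsDiWalk E n f}) ⟨n, f, hf⟩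

lemma ddist_pos_of_walk (hxy : x ≠ y) (hw : IsDiWalk E n f) (hx : f 0 = x) (hy : f n = y) :
    0 < ddist E x y := by
  obtain ⟨g, hg0, hgd, -⟩ := Nat.sInf_mem
    (show {n | ∃ f : ℕ → V, f 0 = x ∧ f n = y ∧ IsDiWalk E n f}.Nonempty from ⟨n, f, hx, hy, hw⟩)
  refine Nat.pos_of_ne_zero fun h => hxy ?_
  rw [← hg0, ← hgd]
  exact congrArg g h.symm

lemma ddist_pos (hsc : StronglyConnected E) (hxy : x ≠ y) : 0 < ddist E x y := by
  obtain ⟨f, hx, hy, hw⟩ := exists_walk_ddist hsc x y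
  exact ddist_pos_of_walk hxy hw hx hy

lemma ddist_eq_one (hs : NoLoops E) (hxy : E x y) : ddist E x y = 1 := by
  have hw : IsDiWalk E 1 (fun i => if i = 0 then x else y) := fun i hi => by
    obtain rfl : i = 0 := by omega
    simpa using hxy
  have := ddist_le_of_walk hw (if_pos rfl) (if_neg one_ne_zero)
  have := ddist_pos_of_walk (by rintro rfl; exact hs x hxy) hw (if_pos rfl) (if_neg one_ne_zero)
  omega

lemma IsDiWalk.append (hf : IsDiWalk E m f) (hg : IsDiWalk E n g) (hfg : f m = g 0) :
    IsDiWalk E (m + n) (fun i => if i < m then f i else g (i - m)) := by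
  intro i hi
  rcases lt_trichotomy (i + 1) m with h | h | h
  · simpa [h, show i < m by omega] using hf i (by omega)
  · subst h
    simpa [hfg] using hf i (by omega)
  · simpa [show ¬i < m by omega, show ¬i + 1 < m by omega, show i + 1 - m = i - m + 1 by omega]
      using hg (i - m) (by omega)

lemma ddist_triangle (hsc : StronglyConnected E) (x y z : V) :
    ddist E x z ≤ ddist E x y + ddist E y z := by
  obtain ⟨f, hf0, hfy, hf⟩ := exists_walk_ddist hsc x y
  obtain ⟨g, hg0, hgz, hg⟩ := exists_walk_ddist hsc y z
  refine ddist_le_of_walk (hf.append hg (hfy.trans hg0.symm)) ?_ ?_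
  · split_ifs with h
    · exact hf0
    · rw [Nat.zero_sub, hg0, ← hfy, Nat.eq_zero_of_not_pos h, hf0]
  · simp [hgz]

lemma IsDiWalk.apply_eq {β : Type*} {φ : V → β} (hw : IsDiWalk E n f)
    (hφ : ∀ u v, E u v → φ u = φ v) : φ (f 0) = φ (f n) := by
  induction n with
  | zero => rfl
  | succ n ih => exact (ih fun i hi => hw i (by omega)).trans (hφ _ _ (hw n (by omega)))

end Walks

section Measures

variable {E : V → V → Prop} {α : ℝ} {x v : V}

noncomputable def degRatio (E : V → V → Prop) (x : V) : ℝ :=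
  ((inDeg E x : ℝ) + outDeg E x) / deg E x

lemma outN_finite (hlf : LocFin E) (x : V) : (outN E x).Finite :=
  (hlf x).subset subset_union_right

lemma mAlpha_self : mAlpha E α x x = α + (1 - α) * inDeg E x / deg E x := if_pos rfl

lemma mAlpha_of_adj (hs : NoLoops E) (h : E x v) : mAlpha E α x v = (1 - α) / deg E x := by
  have hne : v ≠ x := by rintro rfl; exact hs v h
  simp [mAlpha, hne, h]

lemma mAlpha_of_not_adj (hne : v ≠ x) (h : ¬E x v) : mAlpha E α x v = 0 := by
  simp [mAlpha, hne, h]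

lemma support_mAlpha_subset : Function.support (mAlpha E α x) ⊆ insert x (outN E x) := by
  intro v hv
  by_contra h
  simp only [Set.mem_insert_iff, not_or] at h
  exact hv (mAlpha_of_not_adj h.1 h.2)

lemma mAlpha_support_finite (hlf : LocFin E) : (Function.support (mAlpha E α x)).Finite :=
  ((outN_finite hlf x).insert x).subset support_mAlpha_subset

lemma mAlpha_nonneg (hα : α ∈ Icc (0 : ℝ) 1) (v : V) : 0 ≤ mAlpha E α x v := by
  have := sub_nonneg.2 hα.2
  unfold mAlpha
  split_ifs
  · exact add_nonneg hα.1 (by positivity)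
  · positivity
  · exact le_rfl

lemma mAlpha_le_one (hlf : LocFin E) (hα : α ∈ Icc (0 : ℝ) 1) (v : V) : mAlpha E α x v ≤ 1 := by
  have h1α := sub_nonneg.2 hα.2
  unfold mAlpha
  split_ifs with hvx hE
  · have hin : (inDeg E x : ℝ) / deg E x ≤ 1 :=
      div_le_one_of_le₀ (by exact_mod_cast Set.ncard_le_ncard subset_union_left (hlf x))
        (Nat.cast_nonneg _)
    have := mul_le_of_le_one_right h1α hin
    rw [mul_div_assoc]
    linarith
  · have hdeg : (1 : ℝ) ≤ deg E x := by
      exact_mod_cast (Set.ncard_pos (hlf x)).2 ⟨v, Or.inr hE⟩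
    exact div_le_one_of_le₀ (by linarith [hα.1]) (by linarith)
  · exact zero_le_one

lemma finsum_mAlpha_mul (hlf : LocFin E) (hs : NoLoops E) (g : V → ℝ) :
    ∑ᶠ v, mAlpha E α x v * g v =
      mAlpha E α x x * g x + (1 - α) / deg E x * ∑ v ∈ (outN_finite hlf x).toFinset, g v := by
  classical
  have hx : x ∉ (outN_finite hlf x).toFinset := by simpa [outN] using hs x
  rw [finsum_eq_sum_of_support_subset (s := insert x (outN_finite hlf x).toFinset),
    Finset.sum_insert hx, Finset.mul_sum]
  · refine congrArg _ (Finset.sum_congr rfl fun v hv => ?_)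
    rw [mAlpha_of_adj hs (by simpa [outN] using hv)]
  · intro v hv
    simpa using support_mAlpha_subset (Function.support_mul_subset_left _ _ hv)

lemma finsum_mAlpha (hlf : LocFin E) (hs : NoLoops E) :
    ∑ᶠ v, mAlpha E α x v = α + (1 - α) * degRatio E x := by
  have h := finsum_mAlpha_mul (α := α) (x := x) hlf hs 1
  simp only [Pi.one_apply, mul_one, Finset.sum_const] at h
  rw [h, mAlpha_self, degRatio, ← Set.ncard_eq_toFinset_card _ (outN_finite hlf x)]
  simp only [outDeg]
  ring

lemma mAlpha_eq_mix [DecidableEq V] {β : ℝ} (hα : α ≠ 1) :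
    mAlpha E β x = fun v => (1 - β) / (1 - α) * mAlpha E α x v +
      (1 - (1 - β) / (1 - α)) * (Pi.single x 1 : V → ℝ) v := by
  have h1α : 1 - α ≠ 0 := sub_ne_zero.2 (Ne.symm hα)
  funext v
  unfold mAlpha
  rcases eq_or_ne v x with rfl | hvx
  · simp only [if_pos, Pi.single_eq_same]
    field_simp
    ring
  · simp only [if_neg hvx, Pi.single_eq_of_ne hvx]
    split_ifs
    · field_simp
      ring
    · ring

end Measures

section Transport

variable {μ ν ρ μ' ν' : V → ℝ} {A B : V → V → ℝ} {d : V → V → ℝ} {T T' : Finset V}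

structure IsPlan (μ ν : V → ℝ) (A : V → V → ℝ) : Prop where
  support_finite : (Function.support fun p : V × V => A p.1 p.2).Finite
  nonneg : ∀ u v, 0 ≤ A u v
  finsum_row : ∀ u, ∑ᶠ v, A u v = μ u
  finsum_col : ∀ v, ∑ᶠ u, A u v = ν v

noncomputable def planCost (d A : V → V → ℝ) : ℝ := ∑ᶠ u, ∑ᶠ v, A u v * d u v

noncomputable def transportCost (d : V → V → ℝ) (μ ν : V → ℝ) : ℝ :=
  sInf (planCost d '' {A | IsPlan μ ν A})

def SupportedIn (A : V → V → ℝ) (T : Finset V) : Prop := ∀ u v, A u v ≠ 0 → u ∈ T ∧ v ∈ T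

namespace SupportedIn

lemma mono (hA : SupportedIn A T) (h : T ⊆ T') : SupportedIn A T' :=
  fun u v huv => ⟨h (hA u v huv).1, h (hA u v huv).2⟩

lemma mix (hA : SupportedIn A T) (hB : SupportedIn B T) (a b : ℝ) :
    SupportedIn (fun u v => a * A u v + b * B u v) T := by
  intro u v huv
  by_cases hAuv : A u v = 0
  · exact hB u v fun hBuv => huv (by simp [hAuv, hBuv])
  · exact hA u v hAuv

lemma finsum_row (hA : SupportedIn A T) (u : V) : ∑ᶠ v, A u v = ∑ v ∈ T, A u v :=
  finsum_eq_sum_of_support_subset _ fun v hv => (hA u v hv).2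

lemma finsum_col (hA : SupportedIn A T) (v : V) : ∑ᶠ u, A u v = ∑ u ∈ T, A u v :=
  finsum_eq_sum_of_support_subset _ fun u hu => (hA u v hu).1

lemma finsum_finsum (hA : SupportedIn A T) : ∑ᶠ u, ∑ᶠ v, A u v = ∑ u ∈ T, ∑ v ∈ T, A u v := by
  rw [finsum_congr hA.finsum_row]
  refine finsum_eq_sum_of_support_subset _ fun u hu => ?_
  obtain ⟨v, -, hv⟩ := Finset.exists_ne_zero_of_sum_ne_zero hu
  exact (hA u v hv).1

lemma planCost (hA : SupportedIn A T) : planCost d A = ∑ u ∈ T, ∑ v ∈ T, A u v * d u v :=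
  finsum_finsum fun u v h => hA u v (left_ne_zero_of_mul h)

end SupportedIn

lemma exists_supportedIn (h : (Function.support fun p : V × V => A p.1 p.2).Finite) :
    ∃ T, SupportedIn A T := by
  classical
  refine ⟨h.toFinset.image Prod.fst ∪ h.toFinset.image Prod.snd, fun u v huv => ?_⟩
  have : (u, v) ∈ h.toFinset := by simpa using huv
  exact ⟨Finset.mem_union_left _ (Finset.mem_image_of_mem _ this),
    Finset.mem_union_right _ (Finset.mem_image_of_mem _ this)⟩

lemma support_finite_of_supportedIn (hA : SupportedIn A T) :
    (Function.support fun p : V × V => A p.1 p.2).Finite :=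
  (T ×ˢ T).finite_toSet.subset fun p hp => Finset.mem_product.2 (hA p.1 p.2 hp)

namespace IsPlan

lemma exists_supportedIn (hA : IsPlan μ ν A) : ∃ T, SupportedIn A T :=
  _root_.exists_supportedIn hA.support_finite

lemma sum_row (hA : IsPlan μ ν A) (hT : SupportedIn A T) (u : V) : ∑ v ∈ T, A u v = μ u := by
  rw [← hT.finsum_row, hA.finsum_row]

lemma sum_col (hA : IsPlan μ ν A) (hT : SupportedIn A T) (v : V) : ∑ u ∈ T, A u v = ν v := by
  rw [← hT.finsum_col, hA.finsum_col]

lemma le_left (hA : IsPlan μ ν A) (u v : V) : A u v ≤ μ u := by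
  obtain ⟨T, hT⟩ := hA.exists_supportedIn
  rw [← hA.sum_row hT u]
  by_cases huv : A u v = 0
  · exact huv ▸ Finset.sum_nonneg fun w _ => hA.nonneg u w
  · exact Finset.single_le_sum (fun w _ => hA.nonneg u w) (hT u v huv).2

lemma le_right (hA : IsPlan μ ν A) (u v : V) : A u v ≤ ν v := by
  obtain ⟨T, hT⟩ := hA.exists_supportedIn
  rw [← hA.sum_col hT v]
  by_cases huv : A u v = 0
  · exact huv ▸ Finset.sum_nonneg fun w _ => hA.nonneg w v
  · exact Finset.single_le_sum (fun w _ => hA.nonneg w v) (hT u v huv).1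

lemma nonneg_right (hA : IsPlan μ ν A) (v : V) : 0 ≤ ν v :=
  (hA.nonneg v v).trans (hA.le_right v v)

lemma support_left_subset (hA : IsPlan μ ν A) (hT : SupportedIn A T) :
    Function.support μ ⊆ T := fun u hu => by
  rw [Function.mem_support, ← hA.sum_row hT] at hu
  obtain ⟨v, -, hv⟩ := Finset.exists_ne_zero_of_sum_ne_zero hu
  exact (hT u v hv).1

lemma support_right_subset (hA : IsPlan μ ν A) (hT : SupportedIn A T) :
    Function.support ν ⊆ T := fun v hv => by
  rw [Function.mem_support, ← hA.sum_col hT] at hv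
  obtain ⟨u, -, hu⟩ := Finset.exists_ne_zero_of_sum_ne_zero hv
  exact (hT u v hu).2

lemma finsum_left_eq_finsum_right (hA : IsPlan μ ν A) : ∑ᶠ u, μ u = ∑ᶠ v, ν v := by
  obtain ⟨T, hT⟩ := hA.exists_supportedIn
  rw [finsum_eq_sum_of_support_subset _ (hA.support_left_subset hT),
    finsum_eq_sum_of_support_subset _ (hA.support_right_subset hT)]
  simp only [← hA.sum_row hT, ← hA.sum_col hT]
  exact Finset.sum_comm

lemma mix (hA : IsPlan μ ν A) (hB : IsPlan μ' ν' B) {a b : ℝ} (ha : 0 ≤ a) (hb : 0 ≤ b) :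
    IsPlan (fun u => a * μ u + b * μ' u) (fun v => a * ν v + b * ν' v)
      (fun u v => a * A u v + b * B u v) := by
  classical
  obtain ⟨T₁, h₁⟩ := hA.exists_supportedIn
  obtain ⟨T₂, h₂⟩ := hB.exists_supportedIn
  have hAT := h₁.mono Finset.subset_union_left (T' := T₁ ∪ T₂)
  have hBT := h₂.mono Finset.subset_union_right (T' := T₁ ∪ T₂)
  have hT := hAT.mix hBT a b
  refine ⟨support_finite_of_supportedIn hT, fun u v => ?_, fun u => ?_, fun v => ?_⟩
  · have := hA.nonneg u v; have := hB.nonneg u v; positivity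
  · rw [hT.finsum_row, Finset.sum_add_distrib, ← Finset.mul_sum, ← Finset.mul_sum,
      hA.sum_row hAT, hB.sum_row hBT]
  · rw [hT.finsum_col, Finset.sum_add_distrib, ← Finset.mul_sum, ← Finset.mul_sum,
      hA.sum_col hAT, hB.sum_col hBT]

lemma planCost_ge (hA : IsPlan μ ν A) (hd : ∀ u v w, d u w ≤ d u v + d v w) (x y : V) :
    (∑ᶠ u, μ u) * d x y - ∑ᶠ u, μ u * d x u - ∑ᶠ v, ν v * d v y ≤ planCost d A := by
  obtain ⟨T, hT⟩ := hA.exists_supportedIn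
  have hμ := hA.support_left_subset hT
  have hν := hA.support_right_subset hT
  rw [finsum_eq_sum_of_support_subset _ hμ,
    finsum_eq_sum_of_support_subset _ ((Function.support_mul_subset_left _ _).trans hμ),
    finsum_eq_sum_of_support_subset _ ((Function.support_mul_subset_left _ _).trans hν),
    hT.planCost]
  simp only [← hA.sum_row hT, ← hA.sum_col hT, Finset.sum_mul]
  rw [Finset.sum_comm (f := fun v u => A u v * d v y), ← Finset.sum_sub_distrib,
    ← Finset.sum_sub_distrib]
  refine Finset.sum_le_sum fun u _ => ?_
  rw [← Finset.sum_sub_distrib, ← Finset.sum_sub_distrib]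
  refine Finset.sum_le_sum fun v _ => ?_
  have := hd x u y
  have := hd u v y
  nlinarith [hA.nonneg u v]

end IsPlan

lemma planCost_mix (hA : SupportedIn A T) (hB : SupportedIn B T) (a b : ℝ) :
    planCost d (fun u v => a * A u v + b * B u v) = a * planCost d A + b * planCost d B := by
  rw [(hA.mix hB a b).planCost, hA.planCost, hB.planCost, Finset.mul_sum, Finset.mul_sum,
    ← Finset.sum_add_distrib]
  refine Finset.sum_congr rfl fun u _ => ?_
  rw [Finset.mul_sum, Finset.mul_sum, ← Finset.sum_add_distrib]
  exact Finset.sum_congr rfl fun v _ => by ring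

lemma isPlan_mul_div {M : ℝ} (hμ : ∀ u, 0 ≤ μ u) (hν : ∀ v, 0 ≤ ν v)
    (hμf : (Function.support μ).Finite) (hνf : (Function.support ν).Finite)
    (hμM : ∑ᶠ u, μ u = M) (hνM : ∑ᶠ v, ν v = M) (hM : 0 < M) :
    IsPlan μ ν (fun u v => μ u * ν v / M) := by
  refine ⟨(hμf.prod hνf).subset fun p hp => ?_, fun u v => ?_, fun u => ?_, fun v => ?_⟩
  · simp only [Function.mem_support, ne_eq, div_eq_zero_iff, mul_eq_zero, not_or] at hp
    exact ⟨hp.1.1, hp.1.2⟩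
  · have := hμ u; have := hν v; positivity
  · simp_rw [mul_div_right_comm, ← mul_finsum, hνM, div_mul_cancel₀ _ hM.ne']
  · simp_rw [mul_div_assoc, ← finsum_mul, hμM, mul_div_cancel₀ _ hM.ne']

lemma isPlan_single [DecidableEq V] (x y : V) :
    IsPlan (Pi.single x 1) (Pi.single y 1)
      (fun u v => (Pi.single x 1 : V → ℝ) u * (Pi.single y 1 : V → ℝ) v) := by
  have hsum : ∀ z : V, ∑ᶠ u, (Pi.single z 1 : V → ℝ) u = 1 := fun z => by
    rw [finsum_eq_single _ z fun u hu => Pi.single_eq_of_ne hu _, Pi.single_eq_same]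
  have hfin : ∀ z : V, (Function.support (Pi.single z 1 : V → ℝ)).Finite := fun z =>
    (Set.finite_singleton z).subset Pi.support_single_subset
  have hnonneg : ∀ z u : V, 0 ≤ (Pi.single z 1 : V → ℝ) u := fun z u => by
    rw [Pi.single_apply]
    positivity
  simpa using isPlan_mul_div (hnonneg x) (hnonneg y) (hfin x) (hfin y) (hsum x) (hsum y) one_pos

lemma planCost_single [DecidableEq V] (x y : V) :
    planCost d (fun u v => (Pi.single x 1 : V → ℝ) u * (Pi.single y 1 : V → ℝ) v) = d x y := by
  rw [planCost, finsum_eq_single _ x fun u hu => by simp [Pi.single_eq_of_ne hu],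
    finsum_eq_single _ y fun v hv => by simp [Pi.single_eq_of_ne hv]]
  simp

lemma IsPlan.sum_mul_div_right (hA : IsPlan μ ν A) (hB : IsPlan ν ρ B) (hBT : SupportedIn B T)
    (u v : V) : ∑ w ∈ T, A u v * B v w / ν v = A u v := by
  rw [← Finset.sum_div, ← Finset.mul_sum, hB.sum_row hBT]
  rcases eq_or_ne (ν v) 0 with h | h
  · rw [h, div_zero, le_antisymm (h ▸ hA.le_right u v) (hA.nonneg u v)]
  · exact mul_div_cancel_right₀ _ h

lemma IsPlan.sum_mul_div_left (hA : IsPlan μ ν A) (hB : IsPlan ν ρ B) (hAT : SupportedIn A T)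
    (v w : V) : ∑ u ∈ T, A u v * B v w / ν v = B v w := by
  rw [← Finset.sum_div, ← Finset.sum_mul, hA.sum_col hAT]
  rcases eq_or_ne (ν v) 0 with h | h
  · rw [h, div_zero, le_antisymm (h ▸ hB.le_left v w) (hB.nonneg v w)]
  · exact mul_div_cancel_left₀ _ h

lemma IsPlan.glue (hA : IsPlan μ ν A) (hB : IsPlan ν ρ B) (hd : ∀ u v w, d u w ≤ d u v + d v w) :
    ∃ C, IsPlan μ ρ C ∧ planCost d C ≤ planCost d A + planCost d B := by
  classical
  obtain ⟨T₁, h₁⟩ := hA.exists_supportedIn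
  obtain ⟨T₂, h₂⟩ := hB.exists_supportedIn
  set T := T₁ ∪ T₂
  have hAT : SupportedIn A T := h₁.mono Finset.subset_union_left
  have hBT : SupportedIn B T := h₂.mono Finset.subset_union_right
  -- `K u v w`: the share of `A u v` passed on from `v` to `w`, in the proportions of `B v ·`.
  set K : V → V → V → ℝ := fun u v w => A u v * B v w / ν v
  have hK0 : ∀ u v w, 0 ≤ K u v w := fun u v w => by
    have := hA.nonneg u v; have := hB.nonneg v w; have := hA.nonneg_right v; positivity
  have hKw : ∀ u v, ∑ w ∈ T, K u v w = A u v := hA.sum_mul_div_right hB hBT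
  have hKu : ∀ v w, ∑ u ∈ T, K u v w = B v w := hA.sum_mul_div_left hB hAT
  set C : V → V → ℝ := fun u w => ∑ v ∈ T, K u v w
  have hCT : SupportedIn C T := fun u w hC => by
    obtain ⟨v, -, hv⟩ := Finset.exists_ne_zero_of_sum_ne_zero hC
    exact ⟨(hAT u v (left_ne_zero_of_mul (left_ne_zero_of_mul hv))).1,
      (hBT v w (right_ne_zero_of_mul (left_ne_zero_of_mul hv))).2⟩
  refine ⟨C, ⟨support_finite_of_supportedIn hCT, fun u w => Finset.sum_nonneg fun v _ => hK0 u v w,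
    fun u => ?_, fun w => ?_⟩, ?_⟩
  · rw [hCT.finsum_row, Finset.sum_comm]
    simp only [hKw, hA.sum_row hAT]
  · rw [hCT.finsum_col, Finset.sum_comm]
    simp only [hKu, hB.sum_col hBT]
  calc planCost d C = ∑ u ∈ T, ∑ w ∈ T, ∑ v ∈ T, K u v w * d u w := by
        simp only [hCT.planCost, C, Finset.sum_mul]
    _ ≤ ∑ u ∈ T, ∑ w ∈ T, ∑ v ∈ T, (K u v w * d u v + K u v w * d v w) := by
        gcongr with u _ w _ v _
        rw [← mul_add]
        exact mul_le_mul_of_nonneg_left (hd u v w) (hK0 u v w)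
    _ = ∑ u ∈ T, ∑ v ∈ T, (∑ w ∈ T, K u v w) * d u v +
          ∑ w ∈ T, ∑ v ∈ T, (∑ u ∈ T, K u v w) * d v w := by
        simp only [Finset.sum_add_distrib, Finset.sum_mul]
        congr 1
        · exact Finset.sum_congr rfl fun u _ => Finset.sum_comm
        · rw [Finset.sum_comm]
          exact Finset.sum_congr rfl fun w _ => Finset.sum_comm
    _ = planCost d A + planCost d B := by
        simp only [hKw, hKu, hAT.planCost, hBT.planCost]
        rw [Finset.sum_comm (f := fun w v => B v w * d v w)]

lemma planCost_nonneg (hd : ∀ u v, 0 ≤ d u v) (hA : IsPlan μ ν A) : 0 ≤ planCost d A :=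
  finsum_nonneg fun u => finsum_nonneg fun v => mul_nonneg (hA.nonneg u v) (hd u v)

lemma transportCost_le (hd : ∀ u v, 0 ≤ d u v) (hA : IsPlan μ ν A) :
    transportCost d μ ν ≤ planCost d A :=
  csInf_le ⟨0, by rintro _ ⟨B, hB, rfl⟩; exact planCost_nonneg hd hB⟩ ⟨A, hA, rfl⟩

lemma le_transportCost {c : ℝ} (hne : ∃ A, IsPlan μ ν A)
    (h : ∀ A, IsPlan μ ν A → c ≤ planCost d A) : c ≤ transportCost d μ ν := by
  obtain ⟨A, hA⟩ := hne
  exact le_csInf ⟨_, A, hA, rfl⟩ (by rintro _ ⟨B, hB, rfl⟩; exact h B hB)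

lemma transportCost_eq_zero_of_finsum_ne (h : ∑ᶠ u, μ u ≠ ∑ᶠ v, ν v) : transportCost d μ ν = 0 := by
  have : {A | IsPlan μ ν A} = ∅ :=
    Set.eq_empty_of_forall_notMem fun _ hA => h (IsPlan.finsum_left_eq_finsum_right hA)
  rw [transportCost, this, Set.image_empty, Real.sInf_empty]

lemma transportCost_triangle (hd₀ : ∀ u v, 0 ≤ d u v) (hd : ∀ u v w, d u w ≤ d u v + d v w)
    (hμν : ∃ A, IsPlan μ ν A) (hνρ : ∃ B, IsPlan ν ρ B) :
    transportCost d μ ρ ≤ transportCost d μ ν + transportCost d ν ρ := by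
  have hglue : ∀ A B, IsPlan μ ν A → IsPlan ν ρ B →
      transportCost d μ ρ ≤ planCost d A + planCost d B := fun A B hA hB => by
    obtain ⟨C, hC, hcost⟩ := hA.glue hB hd
    exact (transportCost_le hd₀ hC).trans hcost
  have h₁ : ∀ B, IsPlan ν ρ B → transportCost d μ ρ - planCost d B ≤ transportCost d μ ν :=
    fun B hB => le_transportCost hμν fun A hA => sub_le_iff_le_add.2 (hglue A B hA hB)
  have h₂ : transportCost d μ ρ - transportCost d μ ν ≤ transportCost d ν ρ :=
    le_transportCost hνρ fun B hB => by linarith [h₁ B hB]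
  linarith

lemma transportCost_mix_le (hd₀ : ∀ u v, 0 ≤ d u v) (hμν : ∃ A, IsPlan μ ν A)
    (hB : IsPlan μ' ν' B) {a b : ℝ} (ha : 0 < a) (hb : 0 ≤ b) :
    transportCost d (fun u => a * μ u + b * μ' u) (fun v => a * ν v + b * ν' v) ≤
      a * transportCost d μ ν + b * planCost d B := by
  have h : ∀ A, IsPlan μ ν A →
      (transportCost d (fun u => a * μ u + b * μ' u) (fun v => a * ν v + b * ν' v) -
        b * planCost d B) / a ≤ planCost d A := fun A hA => by
    classical
    obtain ⟨T₁, h₁⟩ := hA.exists_supportedIn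
    obtain ⟨T₂, h₂⟩ := hB.exists_supportedIn
    have hcost := planCost_mix (d := d) (h₁.mono Finset.subset_union_left (T' := T₁ ∪ T₂))
      (h₂.mono Finset.subset_union_right) a b
    have := transportCost_le hd₀ (hA.mix hB ha.le hb)
    rw [div_le_iff₀ ha]
    linarith
  have := le_transportCost hμν h
  rw [div_le_iff₀ ha] at this
  linarith

lemma le_transportCost_of_triangle (hd : ∀ u v w, d u w ≤ d u v + d v w)
    (hμν : ∃ A, IsPlan μ ν A) (x y : V) :
    (∑ᶠ u, μ u) * d x y - ∑ᶠ u, μ u * d x u - ∑ᶠ v, ν v * d v y ≤ transportCost d μ ν :=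
  le_transportCost hμν fun _ hA => hA.planCost_ge hd x y

end Transport

section Curvature

variable {E : V → V → Prop} {α : ℝ} {x y : V}

lemma Wass_eq_transportCost (hlf : LocFin E) (hα : α ∈ Icc (0 : ℝ) 1) (x y : V) :
    Wass E α x y = transportCost (fun u v => (ddist E u v : ℝ)) (mAlpha E α x) (mAlpha E α y) := by
  rw [Wass, transportCost]
  congr 1
  ext w
  constructor
  · rintro ⟨A, hA, rfl⟩
    exact ⟨A, ⟨hA.1, fun u v => (hA.2.1 u v).1, hA.2.2.1, hA.2.2.2⟩, rfl⟩
  · rintro ⟨A, hA, rfl⟩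
    exact ⟨A, ⟨hA.support_finite,
      fun u v => ⟨hA.nonneg u v, (hA.le_left u v).trans (mAlpha_le_one hlf hα u)⟩,
      hA.finsum_row, hA.finsum_col⟩, rfl⟩

lemma exists_isPlan_mAlpha (hlf : LocFin E) (hs : NoLoops E) (hα : α ∈ Ioo (0 : ℝ) 1)
    (hr : degRatio E x = degRatio E y) : ∃ A, IsPlan (mAlpha E α x) (mAlpha E α y) A := by
  have hα' : α ∈ Icc (0 : ℝ) 1 := Ioo_subset_Icc_self hα
  have hM : 0 < α + (1 - α) * degRatio E x := by
    have : 0 ≤ degRatio E x := by unfold degRatio; positivity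
    nlinarith [hα.1, hα.2]
  exact ⟨_, isPlan_mul_div (mAlpha_nonneg hα') (mAlpha_nonneg hα') (mAlpha_support_finite hlf)
    (mAlpha_support_finite hlf) (finsum_mAlpha hlf hs) (hr ▸ finsum_mAlpha hlf hs) hM⟩

lemma ricciAlpha_eq_one_of_degRatio_ne (hlf : LocFin E) (hs : NoLoops E) (hα : α ∈ Ico (0 : ℝ) 1)
    (hr : degRatio E x ≠ degRatio E y) : ricciAlpha E α x y = 1 := by
  have h1α : 1 - α ≠ 0 := by linarith [hα.2]
  rw [ricciAlpha, Wass_eq_transportCost hlf (Ico_subset_Icc_self hα), transportCost_eq_zero_of_finsum_ne,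
    zero_div, sub_zero]
  rw [finsum_mAlpha hlf hs, finsum_mAlpha hlf hs]
  exact fun h => hr (mul_left_cancel₀ h1α (add_left_cancel h))

lemma degRatio_eq_of_ricciTendsto (hlf : LocFin E) (hs : NoLoops E) {k : ℝ}
    (h : RicciTendsto E x y k) : degRatio E x = degRatio E y := by
  by_contra hr
  have hone : Tendsto (fun α : ℝ => 1 - α) (𝓝[<] 1) (𝓝[>] 0) := by
    refine tendsto_nhdsWithin_of_tendsto_nhds_of_eventually_within _ ?_ ?_
    · have : Tendsto (fun α : ℝ => 1 - α) (𝓝 1) (𝓝 (1 - 1)) := (continuous_sub_left 1).tendsto 1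
      simpa using this.mono_left nhdsWithin_le_nhds
    · filter_upwards [self_mem_nhdsWithin] with α (hα : α < 1) using sub_pos.2 hα
  refine not_tendsto_nhds_of_tendsto_atTop (hone.inv_tendsto_nhdsGT_zero.congr' ?_) k h
  filter_upwards [Ioo_mem_nhdsLT (show (0 : ℝ) < 1 by norm_num)] with α hα
  simp [ricciAlpha_eq_one_of_degRatio_ne hlf hs (Ioo_subset_Ico_self hα) hr]

lemma degRatio_eq_of_forall_adj (hlf : LocFin E) (hs : NoLoops E) (hsc : StronglyConnected E)
    (h : ∀ u v, E u v → ∃ k, RicciTendsto E u v k) (x y : V) : degRatio E x = degRatio E y := by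
  obtain ⟨n, -, f, rfl, rfl, hw⟩ := hsc x y
  exact hw.apply_eq fun u v huv =>
    (h u v huv).elim fun _ hk => degRatio_eq_of_ricciTendsto hlf hs hk

end Curvature

section ConstantDegRatio

variable {E : V → V → Prop} {α β : ℝ} {x y : V}

lemma Wass_triangle (hlf : LocFin E) (hs : NoLoops E) (hsc : StronglyConnected E)
    (hr : ∀ u v, degRatio E u = degRatio E v) (hα : α ∈ Ioo (0 : ℝ) 1) (x y z : V) :
    Wass E α x z ≤ Wass E α x y + Wass E α y z := by
  simp only [Wass_eq_transportCost hlf (Ioo_subset_Icc_self hα)]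
  exact transportCost_triangle (fun _ _ => Nat.cast_nonneg _)
    (fun u v w => by exact_mod_cast ddist_triangle hsc u v w)
    (exists_isPlan_mAlpha hlf hs hα (hr x y)) (exists_isPlan_mAlpha hlf hs hα (hr y z))

lemma Wass_le_sum_range (hlf : LocFin E) (hs : NoLoops E) (hsc : StronglyConnected E)
    (hr : ∀ u v, degRatio E u = degRatio E v) (hα : α ∈ Ioo (0 : ℝ) 1) (f : ℕ → V) {n : ℕ}
    (hn : 1 ≤ n) : Wass E α (f 0) (f n) ≤ ∑ i ∈ Finset.range n, Wass E α (f i) (f (i + 1)) := by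
  induction n, hn using Nat.le_induction with
  | base => simp
  | succ n _ ih =>
    rw [Finset.sum_range_succ]
    linarith [Wass_triangle hlf hs hsc hr hα (f 0) (f n) (f (n + 1))]

lemma sum_ricciAlpha_le_of_shortest_walk (hlf : LocFin E) (hs : NoLoops E)
    (hsc : StronglyConnected E) (hr : ∀ u v, degRatio E u = degRatio E v)
    (hα : α ∈ Ioo (0 : ℝ) 1) {f : ℕ → V} {n : ℕ} (hw : IsDiWalk E n f)
    (hn : ddist E (f 0) (f n) = n) (hn₀ : 0 < n) :
    ∑ i ∈ Finset.range n, ricciAlpha E α (f i) (f (i + 1)) ≤ n * ricciAlpha E α (f 0) (f n) := by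
  have hedge : ∀ i ∈ Finset.range n,
      ricciAlpha E α (f i) (f (i + 1)) = 1 - Wass E α (f i) (f (i + 1)) := fun i hi => by
    rw [ricciAlpha, ddist_eq_one hs (hw i (Finset.mem_range.1 hi)), Nat.cast_one, div_one]
  have hn' : (n : ℝ) ≠ 0 := by positivity
  rw [Finset.sum_congr rfl hedge, Finset.sum_sub_distrib, ricciAlpha, hn, mul_sub,
    mul_div_cancel₀ _ hn', Finset.sum_const, Finset.card_range, nsmul_one, mul_one]
  linarith [Wass_le_sum_range hlf hs hsc hr hα f hn₀]

lemma Wass_mix_le (hlf : LocFin E) (hs : NoLoops E) (hr : degRatio E x = degRatio E y)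
    (hα : α ∈ Ioo (0 : ℝ) 1) (hβ : β ∈ Ioo (0 : ℝ) 1) (hαβ : α ≤ β) :
    Wass E β x y ≤
      (1 - β) / (1 - α) * Wass E α x y + (1 - (1 - β) / (1 - α)) * ddist E x y := by
  classical
  have h1α : 0 < 1 - α := by linarith [hα.2]
  have hl₀ : 0 < (1 - β) / (1 - α) := div_pos (by linarith [hβ.2]) h1α
  have hl₁ : 0 ≤ 1 - (1 - β) / (1 - α) := sub_nonneg.2 ((div_le_one h1α).2 (by linarith))
  rw [Wass_eq_transportCost hlf (Ioo_subset_Icc_self hβ), Wass_eq_transportCost hlf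
    (Ioo_subset_Icc_self hα), mAlpha_eq_mix (x := x) hα.2.ne, mAlpha_eq_mix (x := y) hα.2.ne]
  calc _ ≤ _ := transportCost_mix_le (fun _ _ => Nat.cast_nonneg _)
        (exists_isPlan_mAlpha hlf hs hα hr) (isPlan_single x y) hl₀ hl₁
    _ = _ := by rw [planCost_single]

lemma ricciAlpha_div_monotoneOn (hlf : LocFin E) (hs : NoLoops E) (hsc : StronglyConnected E)
    (hr : degRatio E x = degRatio E y) (hxy : x ≠ y) :
    MonotoneOn (fun α => ricciAlpha E α x y / (1 - α)) (Ioo 0 1) := by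
  intro α hα β hβ hαβ
  have h1α : 0 < 1 - α := by linarith [hα.2]
  have h1β : 0 < 1 - β := by linarith [hβ.2]
  have hn : (0 : ℝ) < ddist E x y := by exact_mod_cast ddist_pos hsc hxy
  have hmix := Wass_mix_le hlf hs hr hα hβ hαβ
  set l := (1 - β) / (1 - α)
  have hscale : l * ricciAlpha E α x y ≤ ricciAlpha E β x y := by
    simp only [ricciAlpha]
    have : Wass E β x y / ddist E x y ≤ l * (Wass E α x y / ddist E x y) + (1 - l) := by
      rw [div_le_iff₀ hn]
      calc Wass E β x y ≤ _ := hmix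
        _ = _ := by field_simp
    linarith
  calc ricciAlpha E α x y / (1 - α) = l * ricciAlpha E α x y / (1 - β) := by
        simp only [l]
        field_simp
    _ ≤ ricciAlpha E β x y / (1 - β) := by gcongr

lemma exists_ricciAlpha_div_le (hlf : LocFin E) (hs : NoLoops E) (hsc : StronglyConnected E)
    (hr : degRatio E x = degRatio E y) (hxy : x ≠ y) :
    ∃ C, ∀ α ∈ Ioo (0 : ℝ) 1, ricciAlpha E α x y / (1 - α) ≤ C := by
  have hn : (0 : ℝ) < ddist E x y := by exact_mod_cast ddist_pos hsc hxy
  set Sx := ∑ u ∈ (outN_finite hlf x).toFinset, (ddist E x u : ℝ)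
  set Sy := ∑ v ∈ (outN_finite hlf y).toFinset, (ddist E v y : ℝ)
  refine ⟨1 - degRatio E x + (Sx / deg E x + Sy / deg E y) / ddist E x y, fun α hα => ?_⟩
  have h1α : 0 < 1 - α := by linarith [hα.2]
  have hW := le_transportCost_of_triangle (d := fun u v => (ddist E u v : ℝ))
    (fun u v w => by exact_mod_cast ddist_triangle hsc u v w)
    (exists_isPlan_mAlpha hlf hs hα hr) x y
  rw [← Wass_eq_transportCost hlf (Ioo_subset_Icc_self hα), finsum_mAlpha hlf hs,
    finsum_mAlpha_mul hlf hs, finsum_mAlpha_mul hlf hs] at hW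
  simp only [ddist_self, Nat.cast_zero, mul_zero, zero_add] at hW
  rw [div_le_iff₀ h1α, ricciAlpha, sub_le_iff_le_add, ← sub_le_iff_le_add', le_div_iff₀ hn]
  calc _ = (α + (1 - α) * degRatio E x) * ddist E x y
        - (1 - α) / deg E x * Sx - (1 - α) / deg E y * Sy := by
        field_simp
        ring
    _ ≤ _ := hW

lemma exists_ricciTendsto (hlf : LocFin E) (hs : NoLoops E) (hsc : StronglyConnected E)
    (hr : degRatio E x = degRatio E y) (hxy : x ≠ y) : ∃ k, RicciTendsto E x y k := by
  obtain ⟨C, hC⟩ := exists_ricciAlpha_div_le hlf hs hsc hr hxy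
  exact ⟨_, (ricciAlpha_div_monotoneOn hlf hs hsc hr hxy).tendsto_nhdsWithin_Ioo_left
    ⟨1 / 2, by norm_num⟩ ⟨C, by rintro _ ⟨α, hα, rfl⟩; exact hC α hα⟩⟩

lemma sum_le_mul_of_shortest_walk (hlf : LocFin E) (hs : NoLoops E) (hsc : StronglyConnected E)
    (hr : ∀ u v, degRatio E u = degRatio E v) {f : ℕ → V} {n : ℕ} (hw : IsDiWalk E n f)
    (hn : ddist E (f 0) (f n) = n) (hn₀ : 0 < n) {k : ℕ → ℝ}
    (hk : ∀ i < n, RicciTendsto E (f i) (f (i + 1)) (k i)) {K : ℝ}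
    (hK : RicciTendsto E (f 0) (f n) K) : ∑ i ∈ Finset.range n, k i ≤ n * K := by
  unfold RicciTendsto at hk hK
  refine le_of_tendsto_of_tendsto (tendsto_finsetSum _ fun i hi => hk i (Finset.mem_range.1 hi))
    (hK.const_mul (n : ℝ)) ?_
  filter_upwards [Ioo_mem_nhdsLT (show (0 : ℝ) < 1 by norm_num)] with α hα
  rw [← Finset.sum_div, mul_div_assoc']
  exact div_le_div_of_nonneg_right
    (sum_ricciAlpha_le_of_shortest_walk hlf hs hsc hr hα hw hn hn₀) (by linarith [hα.2])

end ConstantDegRatio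

theorem stmt_4 (E : V → V → Prop) (hlf : LocFin E) (hs : NoLoops E) (hsc : StronglyConnected E) (κ₀ : ℝ)
    (h : ∀ u v : V, E u v → ∃ k : ℝ, RicciTendsto E u v k ∧ κ₀ ≤ k) :
    ∀ x y : V, x ≠ y →
      (∃ n, 1 ≤ n ∧ ∃ f : ℕ → V, f 0 = x ∧ f n = y ∧ IsDiWalk E n f) →
      ∃ k : ℝ, RicciTendsto E x y k ∧ κ₀ ≤ k := by
  intro x y hxy _
  have hr := degRatio_eq_of_forall_adj hlf hs hsc fun u v huv => (h u v huv).imp fun _ hk => hk.1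
  obtain ⟨K, hK⟩ := exists_ricciTendsto hlf hs hsc (hr x y) hxy
  refine ⟨K, hK, ?_⟩
  obtain ⟨f, hx, hy, hw⟩ := exists_walk_ddist hsc x y
  set n := ddist E x y
  have hn₀ : 0 < n := ddist_pos hsc hxy
  choose! k hk using fun i (hi : i < n) => h _ _ (hw i hi)
  have hsum := sum_le_mul_of_shortest_walk hlf hs hsc hr hw (by rw [hx, hy]) hn₀
    (fun i hi => (hk i hi).1) (hx ▸ hy ▸ hK)
  have hκ₀ : n * κ₀ ≤ ∑ i ∈ Finset.range n, k i := by
    simpa using Finset.card_nsmul_le_sum _ _ _ fun i hi => (hk i (Finset.mem_range.1 hi)).2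
  exact le_of_mul_le_mul_left (hκ₀.trans hsum) (by exact_mod_cast hn₀)
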